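/- limsup_{k→∞} Γ(k)/k = 3, where Γ(k) is the largest odd positive integer m such that the length-km prefix of the Thue-Morse word is not a k-anti-power. -/

import Mathlib

open Filter

/-- The Thue-Morse word, indexed from 1: `tm i` is the parity of the number of
1's in the binary expansion of `i - 1`. -/
def tm (i : ℕ) : ℕ := (Nat.digits 2 (i - 1)).sum % 2

/-- The factor `t_a t_{a+1} ⋯ t_b` of the Thue-Morse word. -/
def seg (a b : ℕ) : List ℕ := (List.range (b + 1 - a)).map (fun j => tm (a + j))

/-- The `i`-th block of length `m` of the Thue-Morse word (blocks indexed from 0):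
`t_{im+1} ⋯ t_{(i+1)m}`. -/
def block (m i : ℕ) : List ℕ := seg (i * m + 1) ((i + 1) * m)

/-- The prefix of the Thue-Morse word of length `k * m` is a `k`-anti-power:
its `k` consecutive blocks of length `m` are pairwise distinct. -/
def IsAntiPowerPrefix (m k : ℕ) : Prop :=
  ∀ i j, i < k → j < k → i ≠ j → block m i ≠ block m j

/-- `w` is a factor (contiguous substring) of the Thue-Morse word. -/
def IsFactor (w : List ℕ) : Prop :=
  ∃ a : ℕ, w = (List.range w.length).map (fun j => tm (a + 1 + j))

/-- `δ(m) = ⌈log₂ (m/3)⌉` (a nonnegative integer for `m ≥ 2`). -/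
noncomputable def delta (m : ℕ) : ℕ := (⌈Real.logb 2 ((m : ℝ) / 3)⌉).toNat

/-- `⌈log₂ m⌉`. -/
noncomputable def ell (m : ℕ) : ℕ := (⌈Real.logb 2 (m : ℝ)⌉).toNat

/-- `K(m)`: the smallest `k` such that the prefix of the Thue-Morse word of
length `k * m` is not a `k`-anti-power. -/
noncomputable def Kap (m : ℕ) : ℕ := sInf {k | ¬ IsAntiPowerPrefix m k}

/-- `γ(k)`: the smallest odd positive integer `m` such that the prefix of the
Thue-Morse word of length `k * m` is a `k`-anti-power. -/
noncomputable def gam (k : ℕ) : ℕ := sInf {m | Odd m ∧ IsAntiPowerPrefix m k}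

/-- `Γ(k)`: the largest odd positive integer `m` such that the prefix of the
Thue-Morse word of length `k * m` is not a `k`-anti-power. -/
noncomputable def Gam (k : ℕ) : ℕ := sSup {m | Odd m ∧ ¬ IsAntiPowerPrefix m k}

/-- The Thue-Morse morphism `μ` (0 ↦ 01, 1 ↦ 10) on words. -/
def mu (w : List ℕ) : List ℕ := w.flatMap (fun a => if a = 0 then [0, 1] else [1, 0])

/-!
Write `t` for the Thue–Morse sequence over `ZMod 2`. If two blocks `i < j` of odd length `m`
coincide, then `t (n + D) = t n` on an interval of length `m`, where `D = (j - i) m = 2^v D'` with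
`D'` odd. The sum `t (n + 2^v D') + t n` only depends on `n / 2^v`, and for odd `D'` the sequence
`t (n + D') + t n` cannot be constant on four consecutive integers, since `t` would then contain
three equal consecutive letters. Hence `m ≤ 3 · 2^v ≤ 3 (j - i) < 3 k`, so `Γ(k) ≤ 3 k`.

Conversely, for `T = 2^t` the blocks `T + 1` and `T² + T + 1` of length `3 T² - T + 1` coincide,
so `Γ(T² + T + 2) ≥ 3 T² - T + 1`, and the ratio tends to `3` along this subsequence.
-/

open Topology

def thueMorse (n : ℕ) : ZMod 2 := ((Nat.digits 2 n).sum : ZMod 2)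

lemma tm_succ (n : ℕ) : tm (n + 1) = (thueMorse n).val := by
  rw [tm, thueMorse, Nat.add_sub_cancel, ZMod.val_natCast]

lemma thueMorse_two_mul (n : ℕ) : thueMorse (2 * n) = thueMorse n := by
  rcases Nat.eq_zero_or_pos n with rfl | hn
  · rfl
  · rw [thueMorse, Nat.digits_def' one_lt_two (by omega)]
    simp [thueMorse]

lemma thueMorse_two_mul_add_one (n : ℕ) : thueMorse (2 * n + 1) = thueMorse n + 1 := by
  rw [thueMorse, Nat.digits_def' one_lt_two (by omega),
    show (2 * n + 1) % 2 = 1 by omega, show (2 * n + 1) / 2 = n by omega]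
  simp [thueMorse, add_comm]

lemma thueMorse_two_pow_add {a x : ℕ} (hx : x < 2 ^ a) :
    thueMorse (2 ^ a + x) = thueMorse x + 1 := by
  induction a generalizing x with
  | zero =>
    obtain rfl : x = 0 := by simpa using hx
    decide
  | succ a ih =>
    rw [pow_succ] at hx
    rcases Nat.even_or_odd' x with ⟨q, rfl | rfl⟩
    · rw [show 2 ^ (a + 1) + 2 * q = 2 * (2 ^ a + q) by ring, thueMorse_two_mul,
        thueMorse_two_mul, ih (by omega)]
    · rw [show 2 ^ (a + 1) + (2 * q + 1) = 2 * (2 ^ a + q) + 1 by ring,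
        thueMorse_two_mul_add_one, thueMorse_two_mul_add_one, ih (by omega)]

lemma thueMorse_three_mul_two_pow_add {b x : ℕ} (hx : x < 2 ^ b) :
    thueMorse (3 * 2 ^ b + x) = thueMorse x := by
  rw [show 3 * 2 ^ b + x = 2 ^ (b + 1) + (2 ^ b + x) by ring,
    thueMorse_two_pow_add (by rw [pow_succ]; omega), thueMorse_two_pow_add hx]
  ring_nf
  reduce_mod_char

lemma thueMorse_two_mul_add_one_ne (n : ℕ) : thueMorse (2 * n + 1) ≠ thueMorse (2 * n) := by
  rw [thueMorse_two_mul, thueMorse_two_mul_add_one]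
  generalize thueMorse n = a
  revert a
  decide

lemma thueMorse_no_three_eq (u : ℕ) :
    ¬ (thueMorse u = thueMorse (u + 1) ∧ thueMorse (u + 1) = thueMorse (u + 2)) := by
  rintro ⟨h₁, h₂⟩
  rcases Nat.even_or_odd' u with ⟨w, rfl | rfl⟩
  · exact thueMorse_two_mul_add_one_ne w h₁.symm
  · rw [show 2 * w + 1 + 1 = 2 * (w + 1) by ring,
      show 2 * w + 1 + 2 = 2 * (w + 1) + 1 by ring] at h₂
    exact thueMorse_two_mul_add_one_ne (w + 1) h₂.symm

def shiftDiff (D n : ℕ) : ZMod 2 := thueMorse (n + D) + thueMorse n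

lemma shiftDiff_two_mul (D n : ℕ) : shiftDiff (2 * D) n = shiftDiff D (n / 2) := by
  rcases Nat.even_or_odd' n with ⟨u, rfl | rfl⟩
  · rw [shiftDiff, shiftDiff, show 2 * u + 2 * D = 2 * (u + D) by ring,
      show 2 * u / 2 = u by omega, thueMorse_two_mul, thueMorse_two_mul]
  · rw [shiftDiff, shiftDiff, show 2 * u + 1 + 2 * D = 2 * (u + D) + 1 by ring,
      show (2 * u + 1) / 2 = u by omega, thueMorse_two_mul_add_one, thueMorse_two_mul_add_one]
    ring_nf
    reduce_mod_char

lemma shiftDiff_two_pow_mul (v D n : ℕ) : shiftDiff (2 ^ v * D) n = shiftDiff D (n / 2 ^ v) := by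
  induction v generalizing D with
  | zero => simp
  | succ v ih =>
    rw [pow_succ, mul_assoc, ih, shiftDiff_two_mul, Nat.div_div_eq_div_mul]

lemma shiftDiff_odd_not_eq_and_eq {D : ℕ} (hD : Odd D) (a : ℕ) :
    ¬ (shiftDiff D a = shiftDiff D (a + 1) ∧ shiftDiff D (a + 2) = shiftDiff D (a + 3)) := by
  obtain ⟨e, rfl⟩ := hD
  have eq_of_even_pair (u : ℕ) :
      shiftDiff (2 * e + 1) (2 * u) = shiftDiff (2 * e + 1) (2 * u + 1) →
      thueMorse (u + e) = thueMorse (u + e + 1) := by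
    rw [shiftDiff, shiftDiff, show 2 * u + (2 * e + 1) = 2 * (u + e) + 1 by ring,
      show 2 * u + 1 + (2 * e + 1) = 2 * (u + e + 1) by ring, thueMorse_two_mul_add_one,
      thueMorse_two_mul, thueMorse_two_mul, thueMorse_two_mul_add_one]
    intro h
    linear_combination h
  have eq_of_odd_pair (u : ℕ) :
      shiftDiff (2 * e + 1) (2 * u + 1) = shiftDiff (2 * e + 1) (2 * (u + 1)) →
      thueMorse u = thueMorse (u + 1) := by
    rw [shiftDiff, shiftDiff, show 2 * u + 1 + (2 * e + 1) = 2 * (u + e + 1) by ring,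
      show 2 * (u + 1) + (2 * e + 1) = 2 * (u + e + 1) + 1 by ring, thueMorse_two_mul,
      thueMorse_two_mul_add_one, thueMorse_two_mul_add_one, thueMorse_two_mul]
    intro h
    linear_combination h
  rintro ⟨h₁, h₂⟩
  rcases Nat.even_or_odd' a with ⟨u, rfl | rfl⟩
  · rw [show 2 * u + 2 = 2 * (u + 1) by ring, show 2 * u + 3 = 2 * (u + 1) + 1 by ring] at h₂
    refine thueMorse_no_three_eq (u + e) ⟨eq_of_even_pair u h₁, ?_⟩
    simpa [add_right_comm u 1 e] using eq_of_even_pair (u + 1) h₂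
  · rw [show 2 * u + 1 + 1 = 2 * (u + 1) by ring] at h₁
    rw [show 2 * u + 1 + 2 = 2 * (u + 1) + 1 by ring,
      show 2 * u + 1 + 3 = 2 * (u + 1 + 1) by ring] at h₂
    exact thueMorse_no_three_eq u ⟨eq_of_odd_pair u h₁, eq_of_odd_pair (u + 1) h₂⟩

lemma length_le_of_shiftDiff_const {v D A L : ℕ} {c : ZMod 2} (hD : Odd D)
    (h : ∀ r < L, shiftDiff (2 ^ v * D) (A + r) = c) : L ≤ 3 * 2 ^ v := by
  by_contra! hL
  -- `[A, A + L)` contains `A` and `2^v (A / 2^v + s)` for `s = 1, 2, 3`, so `shiftDiff D` would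
  -- be constant on four consecutive integers.
  have key (n : ℕ) (h₁ : A ≤ n) (h₂ : n < A + L) : shiftDiff D (n / 2 ^ v) = c := by
    simpa [shiftDiff_two_pow_mul, Nat.add_sub_cancel' h₁] using h (n - A) (by omega)
  have hP : 0 < 2 ^ v := by positivity
  have hA := Nat.div_add_mod A (2 ^ v)
  have hmod := Nat.mod_lt A hP
  have multiple (s : ℕ) (h₁ : 1 ≤ s) (h₃ : s ≤ 3) : shiftDiff D (A / 2 ^ v + s) = c := by
    have hs₁ := Nat.mul_le_mul_left (2 ^ v) h₁
    have hs₃ := Nat.mul_le_mul_left (2 ^ v) h₃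
    have := key (2 ^ v * (A / 2 ^ v + s)) (by rw [mul_add]; omega) (by rw [mul_add]; omega)
    rwa [Nat.mul_div_cancel_left _ hP] at this
  exact shiftDiff_odd_not_eq_and_eq hD (A / 2 ^ v)
    ⟨(key A le_rfl (by omega)).trans (multiple 1 le_rfl (by norm_num)).symm,
      (multiple 2 (by norm_num) (by norm_num)).trans (multiple 3 (by norm_num) le_rfl).symm⟩

lemma shiftDiff_two_pow_mul_eq_zero {v D u₀ L n : ℕ} (h : ∀ s < L, shiftDiff D (u₀ + s) = 0)
    (h₁ : 2 ^ v * u₀ ≤ n) (h₂ : n < 2 ^ v * (u₀ + L)) : shiftDiff (2 ^ v * D) n = 0 := by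
  have hP : 0 < 2 ^ v := by positivity
  have hlo : u₀ ≤ n / 2 ^ v := (Nat.le_div_iff_mul_le hP).2 (by linarith)
  have hhi : n / 2 ^ v < u₀ + L := (Nat.div_lt_iff_lt_mul hP).2 (by linarith)
  rw [shiftDiff_two_pow_mul, ← Nat.add_sub_cancel' hlo]
  exact h _ (by omega)

lemma block_eq_map (m i : ℕ) :
    block m i = (List.range m).map (fun r => (thueMorse (i * m + r)).val) := by
  rw [block, seg, show (i + 1) * m + 1 - (i * m + 1) = m by rw [add_mul]; omega]
  refine List.map_congr_left fun r _ => ?_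
  rw [show i * m + 1 + r = i * m + r + 1 by ring, tm_succ]

lemma block_eq_block_iff_shiftDiff {m i j : ℕ} (hij : i ≤ j) :
    block m i = block m j ↔ ∀ r < m, shiftDiff ((j - i) * m) (i * m + r) = 0 := by
  have hj (r : ℕ) : i * m + r + (j - i) * m = j * m + r := by
    rw [← Nat.sub_add_cancel hij, add_mul]
    simp only [Nat.add_sub_cancel]
    ring
  simp only [block_eq_map, List.map_inj_left, List.mem_range, (ZMod.val_injective 2).eq_iff,
    shiftDiff, hj, CharTwo.add_eq_zero, eq_comm]

lemma le_three_mul_of_block_eq {m i j : ℕ} (hm : Odd m) (hij : i < j)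
    (h : block m i = block m j) : m ≤ 3 * (j - i) := by
  obtain ⟨v, w, hw, hvw⟩ := Nat.exists_eq_two_pow_mul_odd (Nat.sub_ne_zero_of_lt hij)
  rw [block_eq_block_iff_shiftDiff hij.le, hvw, mul_assoc] at h
  have hmv : m ≤ 3 * 2 ^ v := length_le_of_shiftDiff_const (hw.mul hm) h
  have hvj : 2 ^ v ≤ j - i := hvw ▸ Nat.le_mul_of_pos_right _ hw.pos
  omega

lemma le_three_mul_of_not_isAntiPowerPrefix {m k : ℕ} (hm : Odd m)
    (h : ¬ IsAntiPowerPrefix m k) : m ≤ 3 * k := by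
  simp only [IsAntiPowerPrefix, not_forall, not_not] at h
  obtain ⟨i, j, hi, hj, hij, hblock⟩ := h
  rcases hij.lt_or_gt with hlt | hgt
  · have := le_three_mul_of_block_eq hm hlt hblock
    omega
  · have := le_three_mul_of_block_eq hm hgt hblock.symm
    omega

lemma Gam_le (k : ℕ) : Gam k ≤ 3 * k :=
  csSup_le' fun _ hm => le_three_mul_of_not_isAntiPowerPrefix hm.1 hm.2

lemma four_pow_eq (t : ℕ) : 4 ^ t = 2 ^ t * 2 ^ t := by
  rw [← mul_pow]
  norm_num

lemma odd_three_mul_four_pow_sub_two_pow_add_one {t : ℕ} (ht : t ≠ 0) :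
    Odd (3 * 4 ^ t - 2 ^ t + 1) := by
  refine Even.add_one ((Nat.even_sub ?_).2 (iff_of_true ?_ ?_))
  · rw [four_pow_eq]
    nlinarith [Nat.one_le_two_pow (n := t)]
  · simp [Nat.even_mul, Nat.even_pow, ht]
    decide
  · simp [Nat.even_pow, ht]

lemma shiftDiff_witness {t s : ℕ} (ht : 3 ≤ t) (hs : s ≤ 2) :
    shiftDiff (3 * 4 ^ t - 2 ^ t + 1) (3 * 2 ^ t + 2 + s) = 0 := by
  have hT : 8 ≤ 2 ^ t := by simpa using Nat.pow_le_pow_right two_pos ht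
  have h2t : 2 ^ (2 * t) = 2 ^ t * 2 ^ t := by rw [two_mul, pow_add]
  have hTT : 3 * 2 ^ t ≤ 2 ^ t * 2 ^ t := Nat.mul_le_mul_right _ (by omega)
  have hpair : ∀ x, 2 ≤ x → x ≤ 4 → thueMorse (x + 1) + thueMorse x = 1 := by decide
  rw [shiftDiff, four_pow_eq,
    show 3 * 2 ^ t + 2 + s + (3 * (2 ^ t * 2 ^ t) - 2 ^ t + 1)
      = 3 * 2 ^ (2 * t) + (2 ^ (t + 1) + (3 + s)) by rw [h2t, pow_succ]; omega,
    thueMorse_three_mul_two_pow_add (by rw [h2t, pow_succ]; omega),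
    thueMorse_two_pow_add (by rw [pow_succ]; omega),
    add_assoc (3 * 2 ^ t), thueMorse_three_mul_two_pow_add (by omega), add_right_comm,
    show 3 + s = 2 + s + 1 by ring,
    hpair (2 + s) (by omega) (by omega)]
  decide

lemma not_isAntiPowerPrefix_witness {t : ℕ} (ht : 3 ≤ t) :
    ¬ IsAntiPowerPrefix (3 * 4 ^ t - 2 ^ t + 1) (4 ^ t + 2 ^ t + 2) := by
  have h2t : 2 ^ (2 * t) = 2 ^ t * 2 ^ t := by rw [two_mul, pow_add]
  have hT : 8 ≤ 2 ^ t := by simpa using Nat.pow_le_pow_right two_pos ht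
  have hle : 2 ^ t ≤ 3 * 4 ^ t := by rw [four_pow_eq]; nlinarith
  have hm : ((3 * 4 ^ t - 2 ^ t : ℕ) : ℤ) = 3 * 2 ^ t * 2 ^ t - 2 ^ t := by
    rw [Nat.cast_sub hle]
    push_cast [four_pow_eq]
    ring
  intro h
  refine h (2 ^ t + 1) (4 ^ t + 2 ^ t + 1) (by omega) (by omega) (by omega) ?_
  rw [block_eq_block_iff_shiftDiff (by omega)]
  intro r hr
  -- `(2^t + 1) m = 4^t (3·2^t + 2) + 1`, so the first block lies in
  -- `[4^t (3·2^t + 2), 4^t (3·2^t + 5))`.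
  rw [show 4 ^ t + 2 ^ t + 1 - (2 ^ t + 1) = 2 ^ (2 * t) by rw [h2t, ← four_pow_eq]; omega]
  refine shiftDiff_two_pow_mul_eq_zero (u₀ := 3 * 2 ^ t + 2) (L := 3)
    (fun s hs => shiftDiff_witness ht (by omega)) ?_ ?_ <;>
  · rw [h2t]
    zify at hr ⊢
    rw [hm] at hr ⊢
    nlinarith

lemma Gam_div_le (k : ℕ) : (Gam k : ℝ) / k ≤ 3 :=
  div_le_of_le_mul₀ k.cast_nonneg (by norm_num) (by exact_mod_cast Gam_le k)

lemma le_Gam_witness {t : ℕ} (ht : 3 ≤ t) : 3 * 4 ^ t - 2 ^ t + 1 ≤ Gam (4 ^ t + 2 ^ t + 2) :=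
  le_csSup ⟨_, fun _ hm => le_three_mul_of_not_isAntiPowerPrefix hm.1 hm.2⟩
    ⟨odd_three_mul_four_pow_sub_two_pow_add_one (by omega), not_isAntiPowerPrefix_witness ht⟩

lemma three_sub_le_Gam_div_witness {t : ℕ} (ht : 3 ≤ t) :
    3 - 5 / (2 : ℝ) ^ t ≤ (Gam (4 ^ t + 2 ^ t + 2) : ℝ) / (4 ^ t + 2 ^ t + 2 : ℕ) := by
  have hx : (0 : ℝ) < 2 ^ t := by positivity
  have hk : ((4 ^ t + 2 ^ t + 2 : ℕ) : ℝ) = (2 ^ t) ^ 2 + 2 ^ t + 2 := by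
    push_cast [four_pow_eq]
    ring
  have hm : ((3 * 4 ^ t - 2 ^ t + 1 : ℕ) : ℝ) = 3 * (2 ^ t) ^ 2 - 2 ^ t + 1 := by
    rw [Nat.cast_add, Nat.cast_sub (by rw [four_pow_eq]; nlinarith [Nat.one_le_two_pow (n := t)])]
    push_cast [four_pow_eq]
    ring
  have hGam : 3 * (2 ^ t) ^ 2 - 2 ^ t + 1 ≤ (Gam (4 ^ t + 2 ^ t + 2) : ℝ) := by
    rw [← hm]
    exact_mod_cast le_Gam_witness ht
  have hfrac : 5 / (2 : ℝ) ^ t * ((2 ^ t) ^ 2 + 2 ^ t + 2) = 5 * 2 ^ t + 5 + 10 / 2 ^ t := by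
    field_simp
    ring
  rw [le_div_iff₀ (by rw [hk]; positivity), hk, sub_mul, hfrac]
  nlinarith [div_nonneg (by norm_num : (0 : ℝ) ≤ 10) hx.le]

lemma tendsto_Gam_div_witness :
    Tendsto (fun t : ℕ => (Gam (4 ^ t + 2 ^ t + 2) : ℝ) / (4 ^ t + 2 ^ t + 2 : ℕ))
      atTop (𝓝 3) := by
  have hlower : Tendsto (fun t : ℕ => 3 - 5 / (2 : ℝ) ^ t) atTop (𝓝 3) := by
    simpa using tendsto_const_nhds.sub
      ((tendsto_pow_atTop_atTop_of_one_lt one_lt_two).const_div_atTop (5 : ℝ))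
  exact tendsto_of_tendsto_of_tendsto_of_le_of_le' hlower tendsto_const_nhds
    ((eventually_ge_atTop 3).mono fun t => three_sub_le_Gam_div_witness)
    (Eventually.of_forall fun t => Gam_div_le _)

theorem stmt12 :
    Filter.limsup (fun k : ℕ => (Gam k : ℝ) / k) Filter.atTop = 3 := by
  have hφ : Tendsto (fun t : ℕ => 4 ^ t + 2 ^ t + 2) atTop atTop :=
    tendsto_atTop_mono (fun t => Nat.lt_two_pow_self.le.trans
      ((Nat.le_add_left _ _).trans (Nat.le_add_right _ _))) tendsto_id
  apply le_antisymm
  · exact limsup_le_of_le (isCoboundedUnder_le_of_le atTop (x := 0) fun k => by positivity)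
      (Eventually.of_forall Gam_div_le)
  · refine le_limsup_of_le ⟨3, eventually_map.2 (Eventually.of_forall Gam_div_le)⟩
      fun b hb => le_of_tendsto tendsto_Gam_div_witness (hφ.eventually hb)
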